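/- Let n ≥ 2 be even and V = ℂ^{2n} the symplectic model of Jordan type [n,n] as above. If W₁ = span(α vₙ + β wₙ) with α ≠ 0 and β ≠ 0, then the endomorphism induced by x on W₁^⊥/W₁ has Jordan type [n, n−2]; if W₁ = span(vₙ) or span(wₙ), the induced endomorphism has Jordan type [n−1, n−1]. -/

import Mathlib

open Matrix

/-- The nilpotent endomorphism of Jordan type `[n,n]` on `ℂ^(2n)` (the paper's model). -/
def Xnn (n : ℕ) : Matrix (Fin n ⊕ Fin n) (Fin n ⊕ Fin n) ℂ :=
  Matrix.of fun i j =>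
    match i, j with
    | Sum.inl i, Sum.inl j => if (i : ℕ) = (j : ℕ) + 1 then 1 else 0
    | Sum.inr i, Sum.inr j => if (i : ℕ) = (j : ℕ) + 1 then 1 else 0
    | _, _ => 0

/-- The symplectic form of the `[n,n]` model, as a matrix. -/
def Onn (n : ℕ) : Matrix (Fin n ⊕ Fin n) (Fin n ⊕ Fin n) ℂ :=
  Matrix.of fun i j =>
    match i, j with
    | Sum.inl i, Sum.inr j => if (i : ℕ) + (j : ℕ) = n - 1 then (-1 : ℂ) ^ (i : ℕ) else 0
    | Sum.inr i, Sum.inl j => -(if (j : ℕ) + (i : ℕ) = n - 1 then (-1 : ℂ) ^ (j : ℕ) else 0)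
    | _, _ => 0

/-- The vector `α vₙ + β wₙ` spanning the line `W₁ ⊆ Ker x`. -/
noncomputable def u0 (n : ℕ) (hn : 1 ≤ n) (α β : ℂ) : (Fin n ⊕ Fin n) → ℂ :=
  α • (Pi.single (Sum.inl (⟨n - 1, by omega⟩ : Fin n)) 1 : (Fin n ⊕ Fin n) → ℂ) +
    β • (Pi.single (Sum.inr (⟨n - 1, by omega⟩ : Fin n)) 1 : (Fin n ⊕ Fin n) → ℂ)

/-- The `ω`-orthogonal complement `W₁^⊥` of `W₁ = span(α vₙ + β wₙ)`. -/
noncomputable def Wperp (n : ℕ) (hn : 1 ≤ n) (α β : ℂ) :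
    Submodule ℂ ((Fin n ⊕ Fin n) → ℂ) :=
  LinearMap.ker ((Matrix.toLinearMap₂' ℂ (Onn n)).flip (u0 n hn α β))

/-- The line `W₁`, viewed inside `W₁^⊥`. -/
noncomputable def W1in (n : ℕ) (hn : 1 ≤ n) (α β : ℂ) :
    Submodule ℂ (Wperp n hn α β) :=
  Submodule.comap (Wperp n hn α β).subtype (Submodule.span ℂ {u0 n hn α β})


/-!
Write `u = α vₙ + β wₙ`. For `n` even, `ω(v, u) = β·v₁* + α·w₁*` (coefficients of `v` on `v₁`,
`w₁`), and `Ker x̄^k = (x^{-k}W₁ ∩ W₁^⊥)/W₁`. For `k < n`,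
`x^{-k}W₁ = Ker x^k ⊕ ℂ(α v_{n-k} + β w_{n-k})` has dimension `2k + 1`; `Ker x^k` lies in
`W₁^⊥`, and so does the extra vector, except when `k = n - 1` and `αβ ≠ 0`, where its pairing
with `u` is `2αβ`. For `k ≥ n`, `x^k = 0` and the intersection is `W₁^⊥`, of dimension `2n - 1`.
-/

open Matrix Submodule Module

section

variable {K V : Type*} [Field K] [AddCommGroup V] [Module K V]

theorem sup_span_singleton_inf_ker_of_ne_zero {p : Submodule K V} {φ : V →ₗ[K] K} {y : V}
    (hp : p ≤ LinearMap.ker φ) (hy : φ y ≠ 0) : (p ⊔ span K {y}) ⊓ LinearMap.ker φ = p := by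
  refine le_antisymm (fun v ⟨hv, hφv⟩ => ?_) (le_inf le_sup_left hp)
  obtain ⟨w, hw, z, hz, rfl⟩ := mem_sup.mp hv
  obtain ⟨c, rfl⟩ := mem_span_singleton.mp hz
  have hc : c = 0 := by
    simpa [LinearMap.mem_ker.mp (hp hw), hy] using hφv
  simpa [hc] using hw

theorem comap_restrict_pow (U : Submodule K V) (W : Submodule K U) (f : V →ₗ[K] V)
    (hU : ∀ u ∈ U, f u ∈ U) (k : ℕ) :
    W.comap (f.restrict hU ^ k) = ((W.map U.subtype).comap (f ^ k)).comap U.subtype := by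
  conv_lhs => rw [← comap_map_eq_of_injective U.injective_subtype W]
  rw [Module.End.pow_restrict, ← comap_comp, ← comap_comp]
  rfl

theorem finrank_comap_subtype (U M : Submodule K V) :
    finrank K (M.comap U.subtype) = finrank K ↥(M ⊓ U) := by
  rw [← (comapSubtypeEquivOfLe (inf_le_right : M ⊓ U ≤ U)).finrank_eq, comap_inf,
    comap_subtype_self, inf_top_eq]

theorem finrank_ker_funLeft_add_card {ι κ : Type*} [Fintype ι] [Fintype κ] {f : κ → ι}
    (hf : Function.Injective f) :
    finrank K (LinearMap.ker (LinearMap.funLeft K K f)) + Fintype.card κ = Fintype.card ι := by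
  have rank_nullity := LinearMap.finrank_range_add_finrank_ker (LinearMap.funLeft K K f)
  rw [LinearMap.range_eq_top.2 (LinearMap.funLeft_surjective_of_injective K K f hf), finrank_top,
    finrank_fintype_fun_eq_card, finrank_fintype_fun_eq_card] at rank_nullity
  omega

variable [FiniteDimensional K V]

theorem finrank_ker_mapQ_add_finrank (p : Submodule K V) (f : V →ₗ[K] V)
    (h : p ≤ p.comap f) :
    finrank K (LinearMap.ker (p.mapQ p f h)) + finrank K p = finrank K (p.comap f) := by
  have rank_nullity := LinearMap.finrank_range_add_finrank_ker (p.mkQ ∘ₗ (p.comap f).subtype)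
  rw [LinearMap.range_comp, range_subtype, LinearMap.ker_comp, ker_mkQ,
    (comapSubtypeEquivOfLe h).finrank_eq] at rank_nullity
  rwa [ker_mapQ]

theorem finrank_ker_mapQ_restrict_pow_add {U L : Submodule K V} {W : Submodule K U}
    (hWL : W.map U.subtype = L) {f : V →ₗ[K] V} (hU : ∀ u ∈ U, f u ∈ U)
    (hW : W ≤ W.comap (f.restrict hU)) (k : ℕ) :
    finrank K (LinearMap.ker (W.mapQ W (f.restrict hU) hW ^ k)) + finrank K W =
      finrank K ↥(L.comap (f ^ k) ⊓ U) := by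
  rw [← mapQ_pow, finrank_ker_mapQ_add_finrank, comap_restrict_pow, finrank_comap_subtype, hWL]

end

variable {n : ℕ}

def shiftMatrix (n : ℕ) : Matrix (Fin n) (Fin n) ℂ :=
  of fun i j => if (i : ℕ) = (j : ℕ) + 1 then 1 else 0

theorem Xnn_eq_fromBlocks : Xnn n = fromBlocks (shiftMatrix n) 0 0 (shiftMatrix n) := by
  ext (i | i) (j | j) <;> rfl

theorem shiftMatrix_mulVec_apply (w : Fin n → ℂ) (i : Fin n) :
    (shiftMatrix n *ᵥ w) i = if h : 0 < (i : ℕ) then w ⟨i - 1, by omega⟩ else 0 := by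
  simp only [mulVec, dotProduct, shiftMatrix, of_apply, ite_mul, one_mul, zero_mul]
  split_ifs with h
  · rw [Finset.sum_eq_single ⟨i - 1, by omega⟩
      (fun j _ hj => if_neg fun hij => hj (by ext; simp; omega)) (by simp)]
    simp
    omega
  · exact Finset.sum_eq_zero fun j _ => if_neg (by omega)

theorem shiftMatrix_pow_mulVec_apply (k : ℕ) (w : Fin n → ℂ) (i : Fin n) :
    (shiftMatrix n ^ k *ᵥ w) i = if h : k ≤ (i : ℕ) then w ⟨i - k, by omega⟩ else 0 := by
  induction k generalizing i with
  | zero => simp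
  | succ k ih =>
    rw [pow_succ', ← mulVec_mulVec, shiftMatrix_mulVec_apply]
    split_ifs with h₁ h₂ h₂
    · rw [ih, dif_pos (by simp; omega)]
      congr 2
      simp only
      omega
    · rw [ih, dif_neg (by simp; omega)]
    · omega
    · rfl

theorem shiftMatrix_pow_mulVec_eq_zero_iff {k : ℕ} (w : Fin n → ℂ) :
    shiftMatrix n ^ k *ᵥ w = 0 ↔ w ∘ Fin.castLE (Nat.sub_le n k) = 0 := by
  constructor
  · intro h
    funext j
    have hj := congrFun h ⟨j + k, by omega⟩
    rw [shiftMatrix_pow_mulVec_apply, dif_pos (by simp)] at hj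
    simp only [add_tsub_cancel_right] at hj
    exact hj
  · intro h
    funext i
    rw [shiftMatrix_pow_mulVec_apply]
    split_ifs
    · exact congrFun h ⟨i - k, by omega⟩
    · rfl

theorem Xnn_pow_mulVecLin_apply (k : ℕ) (v : Fin n ⊕ Fin n → ℂ) :
    ((Xnn n).mulVecLin ^ k) v =
      Sum.elim (shiftMatrix n ^ k *ᵥ (v ∘ Sum.inl)) (shiftMatrix n ^ k *ᵥ (v ∘ Sum.inr)) := by
  change (toLin' (Xnn n) ^ k) v = _
  rw [← toLin'_pow, toLin'_apply, Xnn_eq_fromBlocks, fromBlocks_diagonal_pow, fromBlocks_mulVec]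
  simp

theorem Xnn_pow_eq_zero {k : ℕ} (hk : n ≤ k) : (Xnn n).mulVecLin ^ k = 0 := by
  ext v (i | i) <;> simp [Xnn_pow_mulVecLin_apply, shiftMatrix_pow_mulVec_apply] <;> omega

theorem ker_Xnn_pow (k : ℕ) :
    LinearMap.ker ((Xnn n).mulVecLin ^ k) =
      LinearMap.ker (LinearMap.funLeft ℂ ℂ
        (Sum.map (Fin.castLE (Nat.sub_le n k)) (Fin.castLE (Nat.sub_le n k)))) := by
  ext v
  rw [LinearMap.mem_ker, LinearMap.mem_ker, Xnn_pow_mulVecLin_apply, ← Sum.elim_zero_zero,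
    Sum.elim_eq_iff, shiftMatrix_pow_mulVec_eq_zero_iff, shiftMatrix_pow_mulVec_eq_zero_iff]
  simp only [funext_iff, Sum.forall, LinearMap.funLeft_apply, Function.comp_apply, Sum.map_inl,
    Sum.map_inr, Pi.zero_apply]

theorem finrank_ker_Xnn_pow {k : ℕ} (hk : k ≤ n) :
    finrank ℂ (LinearMap.ker ((Xnn n).mulVecLin ^ k)) = 2 * k := by
  have h := finrank_ker_funLeft_add_card (K := ℂ)
    ((Fin.castLE_injective (Nat.sub_le n k)).sumMap (Fin.castLE_injective (Nat.sub_le n k)))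
  rw [← ker_Xnn_pow] at h
  simp only [Fintype.card_sum, Fintype.card_fin] at h
  omega

/-- `α v_{m+1} + β w_{m+1}` in the paper's 1-based numbering. -/
def levelVec (m : Fin n) (a b : ℂ) : Fin n ⊕ Fin n → ℂ :=
  a • Pi.single (Sum.inl m) 1 + b • Pi.single (Sum.inr m) 1

theorem u0_eq_levelVec (hn : 1 ≤ n) (α β : ℂ) : u0 n hn α β = levelVec ⟨n - 1, by omega⟩ α β := rfl

@[simp]
theorem levelVec_inl (m i : Fin n) (a b : ℂ) :
    levelVec m a b (Sum.inl i) = if i = m then a else 0 := by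
  simp [levelVec, Pi.single_apply]

@[simp]
theorem levelVec_inr (m i : Fin n) (a b : ℂ) :
    levelVec m a b (Sum.inr i) = if i = m then b else 0 := by
  simp [levelVec, Pi.single_apply]

theorem levelVec_ne_zero {m : Fin n} {a b : ℂ} (hab : ¬(a = 0 ∧ b = 0)) : levelVec m a b ≠ 0 := by
  intro h
  exact hab ⟨by simpa using congrFun h (Sum.inl m), by simpa using congrFun h (Sum.inr m)⟩

theorem dotProduct_levelVec (v : Fin n ⊕ Fin n → ℂ) (m : Fin n) (a b : ℂ) :
    v ⬝ᵥ levelVec m a b = v (Sum.inl m) * a + v (Sum.inr m) * b := by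
  simp [levelVec, dotProduct_add, dotProduct_smul, dotProduct_single, mul_comm]

theorem Xnn_pow_levelVec {m m' : Fin n} {k : ℕ} (h : (m : ℕ) + k = m') (a b : ℂ) :
    ((Xnn n).mulVecLin ^ k) (levelVec m a b) = levelVec m' a b := by
  ext (i | i) <;>
  · simp only [Xnn_pow_mulVecLin_apply, Sum.elim_inl, Sum.elim_inr, shiftMatrix_pow_mulVec_apply,
      Function.comp_apply, levelVec_inl, levelVec_inr, Fin.ext_iff]
    split_ifs <;> first | rfl | omega

theorem Onn_mulVec_u0 (hn : 1 ≤ n) (heven : Even n) (α β : ℂ) :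
    Onn n *ᵥ u0 n hn α β = levelVec ⟨0, by omega⟩ β α := by
  have hodd : Odd (n - 1) := by
    obtain ⟨m, hm⟩ := heven
    exact ⟨m - 1, by omega⟩
  ext (i | i) <;> simp [u0_eq_levelVec, levelVec, mulVec_add, mulVec_smul, Onn, hodd.neg_one_pow,
    Pi.single_apply, Fin.ext_iff] <;> split_ifs <;> simp_all

theorem mem_Wperp_iff (hn : 1 ≤ n) (heven : Even n) (α β : ℂ) (v : Fin n ⊕ Fin n → ℂ) :
    v ∈ Wperp n hn α β ↔ v (Sum.inl ⟨0, by omega⟩) * β + v (Sum.inr ⟨0, by omega⟩) * α = 0 := by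
  rw [Wperp, LinearMap.mem_ker, LinearMap.flip_apply, toLinearMap₂'_apply', Onn_mulVec_u0 hn heven,
    dotProduct_levelVec]

theorem levelVec_mem_Wperp_iff (hn : 1 ≤ n) (heven : Even n) (m : Fin n) (α β : ℂ) :
    levelVec m α β ∈ Wperp n hn α β ↔ (m : ℕ) ≠ 0 ∨ α = 0 ∨ β = 0 := by
  rw [mem_Wperp_iff hn heven]
  by_cases hm : (m : ℕ) = 0
  · simp only [levelVec_inl, levelVec_inr, Fin.ext_iff, hm, if_true, ne_eq, not_true, false_or]
    rw [mul_comm β α, ← two_mul]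
    simp
  · simp [Fin.ext_iff, hm, Ne.symm hm]

theorem ker_Xnn_pow_le_Wperp (hn : 1 ≤ n) (heven : Even n) (α β : ℂ) {k : ℕ} (hk : k < n) :
    LinearMap.ker ((Xnn n).mulVecLin ^ k) ≤ Wperp n hn α β := by
  intro v hv
  rw [ker_Xnn_pow, LinearMap.mem_ker] at hv
  have hl : v (Sum.inl ⟨0, by omega⟩) = 0 := congrFun hv (Sum.inl ⟨0, by omega⟩)
  have hr : v (Sum.inr ⟨0, by omega⟩) = 0 := congrFun hv (Sum.inr ⟨0, by omega⟩)
  rw [mem_Wperp_iff hn heven, hl, hr]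
  ring

theorem finrank_Wperp (hn : 1 ≤ n) (heven : Even n) {α β : ℂ} (hαβ : ¬(α = 0 ∧ β = 0)) :
    finrank ℂ (Wperp n hn α β) + 1 = 2 * n := by
  obtain ⟨φ, hφ⟩ : ∃ φ : (Fin n ⊕ Fin n → ℂ) →ₗ[ℂ] ℂ, Wperp n hn α β = LinearMap.ker φ := ⟨_, rfl⟩
  have hφ₀ : φ ≠ 0 := by
    rintro rfl
    have hmem (v) : v ∈ Wperp n hn α β := by simp [hφ]
    refine hαβ ⟨?_, ?_⟩
    · simpa using (mem_Wperp_iff hn heven α β _).mp (hmem (Pi.single (Sum.inr ⟨0, by omega⟩) 1))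
    · simpa using (mem_Wperp_iff hn heven α β _).mp (hmem (Pi.single (Sum.inl ⟨0, by omega⟩) 1))
  rw [hφ, Dual.finrank_ker_add_one_of_ne_zero hφ₀, finrank_fintype_fun_eq_card]
  simp [two_mul]

theorem comap_Xnn_pow_span_u0 (hn : 1 ≤ n) (α β : ℂ) {k : ℕ} (hk : k < n) :
    (span ℂ {u0 n hn α β}).comap ((Xnn n).mulVecLin ^ k) =
      LinearMap.ker ((Xnn n).mulVecLin ^ k) ⊔ span ℂ {levelVec ⟨n - 1 - k, by omega⟩ α β} := by
  rw [u0_eq_levelVec, ← Xnn_pow_levelVec (m := ⟨n - 1 - k, by omega⟩) (k := k) (by simp; omega),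
    ← Set.image_singleton, ← map_span, comap_map_eq, sup_comm]

theorem finrank_comap_Xnn_pow_span_u0_inf_Wperp_of_le (hn : 1 ≤ n) (heven : Even n) {α β : ℂ}
    (hαβ : ¬(α = 0 ∧ β = 0)) {k : ℕ} (hk : n ≤ k) :
    finrank ℂ ↥((span ℂ {u0 n hn α β}).comap ((Xnn n).mulVecLin ^ k) ⊓ Wperp n hn α β) + 1 =
      2 * n := by
  rw [Xnn_pow_eq_zero hk, comap_zero, top_inf_eq, finrank_Wperp hn heven hαβ]

theorem finrank_comap_Xnn_pow_span_u0_inf_Wperp_of_lt (hn : 1 ≤ n) (heven : Even n) {α β : ℂ}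
    (hαβ : ¬(α = 0 ∧ β = 0)) {k : ℕ} (hk : k < n) (h : k + 1 < n ∨ α = 0 ∨ β = 0) :
    finrank ℂ ↥((span ℂ {u0 n hn α β}).comap ((Xnn n).mulVecLin ^ k) ⊓ Wperp n hn α β) =
      2 * k + 1 := by
  have hy : levelVec ⟨n - 1 - k, by omega⟩ α β ∈ Wperp n hn α β := by
    rw [levelVec_mem_Wperp_iff hn heven]
    exact h.imp_left fun h => show n - 1 - k ≠ 0 by omega
  have hy' : levelVec ⟨n - 1 - k, by omega⟩ α β ∉ LinearMap.ker ((Xnn n).mulVecLin ^ k) := by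
    rw [LinearMap.mem_ker, Xnn_pow_levelVec (m' := ⟨n - 1, by omega⟩) (by simp; omega)]
    exact levelVec_ne_zero hαβ
  have hle := sup_le (ker_Xnn_pow_le_Wperp hn heven α β hk) ((span_singleton_le_iff_mem _ _).mpr hy)
  rw [comap_Xnn_pow_span_u0 hn α β hk, inf_eq_left.mpr hle, finrank_sup_span_singleton hy',
    finrank_ker_Xnn_pow hk.le]

theorem finrank_comap_Xnn_pow_pred_span_u0_inf_Wperp (hn : 1 ≤ n) (heven : Even n) {α β : ℂ}
    (hα : α ≠ 0) (hβ : β ≠ 0) :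
    finrank ℂ ↥((span ℂ {u0 n hn α β}).comap ((Xnn n).mulVecLin ^ (n - 1)) ⊓ Wperp n hn α β) =
      2 * (n - 1) := by
  obtain ⟨φ, hφ⟩ : ∃ φ : (Fin n ⊕ Fin n → ℂ) →ₗ[ℂ] ℂ, Wperp n hn α β = LinearMap.ker φ := ⟨_, rfl⟩
  have hy : φ (levelVec ⟨n - 1 - (n - 1), by omega⟩ α β) ≠ 0 := by
    intro h
    have hmem := (levelVec_mem_Wperp_iff hn heven _ α β).mp (hφ ▸ LinearMap.mem_ker.mpr h)
    simp [hα, hβ] at hmem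
  have hle := hφ ▸ ker_Xnn_pow_le_Wperp hn heven α β (k := n - 1) (by omega)
  rw [comap_Xnn_pow_span_u0 hn α β (by omega), hφ, sup_span_singleton_inf_ker_of_ne_zero hle hy,
    finrank_ker_Xnn_pow (by omega)]

/-- `dim Ker(x̄^k) = Σⱼ min(k, λⱼ)` for the Jordan type `λ` of `x̄`, so these dimension counts
encode the Jordan types `[n, n-2]` and `[n-1, n-1]`. -/
theorem induced_jordan_type_even (n : ℕ) (hn : 2 ≤ n) (heven : Even n)
    (α β : ℂ) (hαβ : ¬(α = 0 ∧ β = 0))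
    (hn1 : 1 ≤ n)
    (hstab : ∀ u ∈ Wperp n hn1 α β, (Xnn n).mulVecLin u ∈ Wperp n hn1 α β)
    (hmap : W1in n hn1 α β ≤
      (W1in n hn1 α β).comap ((Xnn n).mulVecLin.restrict hstab)) :
    (α ≠ 0 → β ≠ 0 →
      ∀ k : ℕ,
        Module.finrank ℂ
          (LinearMap.ker
            ((Submodule.mapQ (W1in n hn1 α β) (W1in n hn1 α β)
                ((Xnn n).mulVecLin.restrict hstab) hmap) ^ k)) =
          min k n + min k (n - 2)) ∧
    (α = 0 ∨ β = 0 →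
      ∀ k : ℕ,
        Module.finrank ℂ
          (LinearMap.ker
            ((Submodule.mapQ (W1in n hn1 α β) (W1in n hn1 α β)
                ((Xnn n).mulVecLin.restrict hstab) hmap) ^ k)) =
          2 * min k (n - 1)) := by
  have hspan : span ℂ {u0 n hn1 α β} ≤ Wperp n hn1 α β := by
    rw [span_singleton_le_iff_mem, u0_eq_levelVec, levelVec_mem_Wperp_iff hn1 heven]
    exact Or.inl (show n - 1 ≠ 0 by omega)
  have hW1 : finrank ℂ (W1in n hn1 α β) = 1 := by
    rw [W1in, (comapSubtypeEquivOfLe hspan).finrank_eq]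
    exact finrank_span_singleton (levelVec_ne_zero hαβ)
  have hW1map : (W1in n hn1 α β).map (Wperp n hn1 α β).subtype = span ℂ {u0 n hn1 α β} := by
    rw [W1in, map_comap_subtype, inf_eq_right.mpr hspan]
  have hdim (k : ℕ) := finrank_ker_mapQ_restrict_pow_add hW1map hstab hmap k
  simp only [hW1] at hdim
  refine ⟨fun hα hβ k => ?_, fun hdeg k => ?_⟩
  · rcases lt_trichotomy (k + 1) n with hk | hk | hk
    · have := finrank_comap_Xnn_pow_span_u0_inf_Wperp_of_lt hn1 heven hαβ (by omega) (Or.inl hk)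
      have := hdim k
      omega
    · obtain rfl : k = n - 1 := by omega
      have := finrank_comap_Xnn_pow_pred_span_u0_inf_Wperp hn1 heven hα hβ
      have := hdim (n - 1)
      omega
    · have := finrank_comap_Xnn_pow_span_u0_inf_Wperp_of_le hn1 heven hαβ (k := k) (by omega)
      have := hdim k
      omega
  · rcases lt_or_ge k n with hk | hk
    · have := finrank_comap_Xnn_pow_span_u0_inf_Wperp_of_lt hn1 heven hαβ hk (Or.inr hdeg)
      have := hdim k
      omega
    · have := finrank_comap_Xnn_pow_span_u0_inf_Wperp_of_le hn1 heven hαβ hk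
      have := hdim k
      omega
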